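/- Let x > 0, t > 0, and let f : (0,∞) → ℝ be measurable with ∫₀^∞ |f(y)|y² dy < ∞ and ∫₀^∞ |f(y)|y⁴ dy < ∞. Then |∫₀^∞ f(y)·[t·(y/x)·sinh(xy/t)·e^{-(x²+y²)/(2t)} - y²] dy| ≤ (C_f·x² + C'_f)/t, where C_f = (1/2)∫₀^∞|f(y)|y²dy and C'_f = (1/2)∫₀^∞|f(y)|y⁴dy. -/

import Mathlib

/-!
On `y > 0` put `a = xy/t ≤ c = (x² + y²)/(2t)` (AM-GM). The density of the rescaled semigroup is
`t (y/x) · sinh a · e^{-c}`, and `y² = t (y/x) · a`, so everything reduces to the scalar estimate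
`|sinh a · e^{-c} - a| ≤ a c`: from below by `sinh a ≥ a` and `e^{-c} ≥ 1 - c`, from above by
`sinh a · e^{-c} ≤ sinh a · e^{-a} = (1 - e^{-2a})/2 ≤ a`. Multiplying back gives
`|density - y²| ≤ y² (x² + y²)/(2t)`, which integrates against `|f|` to the claimed bound.
-/

open MeasureTheory Set Real

lemma sinh_mul_exp_neg_le_self (a : ℝ) : sinh a * exp (-a) ≤ a := by
  have hsq : exp (-(2 * a)) = exp (-a) * exp (-a) := by rw [← exp_add]; ring_nf
  have hinv : exp a * exp (-a) = 1 := by rw [← exp_add, add_neg_cancel, exp_zero]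
  have hlin : 1 - 2 * a ≤ exp (-(2 * a)) := by linarith [add_one_le_exp (-(2 * a))]
  rw [sinh_eq]
  nlinarith

lemma sub_mul_le_sinh_mul_exp_neg {a : ℝ} (c : ℝ) (ha : 0 ≤ a) :
    a - a * c ≤ sinh a * exp (-c) := by
  have hsinh : a ≤ sinh a := self_le_sinh_iff.2 ha
  have hexp : 1 - c ≤ exp (-c) := by linarith [add_one_le_exp (-c)]
  nlinarith [mul_le_mul_of_nonneg_left hexp ha, mul_le_mul_of_nonneg_right hsinh (exp_pos (-c)).le]

lemma abs_sinh_mul_exp_neg_sub_le {a c : ℝ} (ha : 0 ≤ a) (hac : a ≤ c) :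
    |sinh a * exp (-c) - a| ≤ a * c := by
  have hupper : sinh a * exp (-c) ≤ a :=
    calc sinh a * exp (-c) ≤ sinh a * exp (-a) :=
          mul_le_mul_of_nonneg_left (exp_le_exp.2 (neg_le_neg hac)) (sinh_nonneg_iff.2 ha)
      _ ≤ a := sinh_mul_exp_neg_le_self a
  rw [abs_le]
  constructor
  · linarith [sub_mul_le_sinh_mul_exp_neg c ha]
  · nlinarith

/-- `K_t Q_t f(x) = ∫₀^∞ f(y) · rescaledBessel3Density t x y dy`. -/
noncomputable def rescaledBessel3Density (t x y : ℝ) : ℝ :=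
  t * (y / x) * sinh (x * y / t) * exp (-(x ^ 2 + y ^ 2) / (2 * t))

lemma abs_rescaledBessel3Density_sub_sq_le {t x y : ℝ} (ht : 0 < t) (hx : 0 < x) (hy : 0 ≤ y) :
    |rescaledBessel3Density t x y - y ^ 2| ≤ y ^ 2 * (x ^ 2 + y ^ 2) / (2 * t) := by
  have ha : 0 ≤ x * y / t := by positivity
  have hac : x * y / t ≤ (x ^ 2 + y ^ 2) / (2 * t) := by
    rw [div_le_div_iff₀ ht (by positivity)]
    nlinarith [sq_nonneg (x - y)]
  have hfactor : rescaledBessel3Density t x y - y ^ 2 = t * (y / x) *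
      (sinh (x * y / t) * exp (-((x ^ 2 + y ^ 2) / (2 * t))) - x * y / t) := by
    rw [rescaledBessel3Density, neg_div]
    field_simp
  rw [hfactor, abs_mul, abs_of_nonneg (by positivity)]
  calc t * (y / x) * |sinh (x * y / t) * exp (-((x ^ 2 + y ^ 2) / (2 * t))) - x * y / t|
      ≤ t * (y / x) * (x * y / t * ((x ^ 2 + y ^ 2) / (2 * t))) :=
        mul_le_mul_of_nonneg_left (abs_sinh_mul_exp_neg_sub_le ha hac) (by positivity)
    _ = y ^ 2 * (x ^ 2 + y ^ 2) / (2 * t) := by field_simp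

theorem bessel3_semigroup_invariant_bound_general (x t : ℝ) (hx : 0 < x) (ht : 0 < t)
    (f : ℝ → ℝ)
    (hf2 : IntegrableOn (fun y => |f y| * y ^ 2) (Ioi (0 : ℝ)))
    (hf4 : IntegrableOn (fun y => |f y| * y ^ 4) (Ioi (0 : ℝ))) :
    |∫ y in Ioi (0 : ℝ),
        f y * (t * (y / x) * Real.sinh (x * y / t)
          * Real.exp (-(x ^ 2 + y ^ 2) / (2 * t)) - y ^ 2)|
      ≤ (((1 : ℝ) / 2) * (∫ y in Ioi (0 : ℝ), |f y| * y ^ 2) * x ^ 2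
          + ((1 : ℝ) / 2) * ∫ y in Ioi (0 : ℝ), |f y| * y ^ 4) / t := by
  have hpointwise : ∀ y ∈ Ioi (0 : ℝ), ‖f y * (rescaledBessel3Density t x y - y ^ 2)‖
      ≤ x ^ 2 / (2 * t) * (|f y| * y ^ 2) + 1 / (2 * t) * (|f y| * y ^ 4) := by
    intro y hy
    rw [Real.norm_eq_abs, abs_mul]
    calc |f y| * |rescaledBessel3Density t x y - y ^ 2|
        ≤ |f y| * (y ^ 2 * (x ^ 2 + y ^ 2) / (2 * t)) :=
          mul_le_mul_of_nonneg_left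
            (abs_rescaledBessel3Density_sub_sq_le ht hx hy.le) (abs_nonneg _)
      _ = _ := by ring
  calc _ ≤ ∫ y in Ioi (0 : ℝ), x ^ 2 / (2 * t) * (|f y| * y ^ 2) + 1 / (2 * t) * (|f y| * y ^ 4) :=
        norm_integral_le_of_norm_le ((hf2.const_mul _).add (hf4.const_mul _))
          ((ae_restrict_mem measurableSet_Ioi).mono hpointwise)
    _ = _ := by
      rw [integral_add (hf2.const_mul _) (hf4.const_mul _), integral_const_mul, integral_const_mul]
      ring

/-- Quantitative approximation of the invariant measure of the Bessel-3 process by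
its rescaled semigroup: for `x, t > 0` and `f` with `∫|f|y²dy, ∫|f|y⁴dy < ∞`,
`|∫ f(y)[t(y/x)sinh(xy/t)e^{-(x²+y²)/(2t)} - y²] dy| ≤ (C_f x² + C'_f)/t`. -/
theorem bessel3_semigroup_invariant_bound (x t : ℝ) (hx : 0 < x) (ht : 0 < t)
    (f : ℝ → ℝ) (hmeas : Measurable f)
    (hf2 : IntegrableOn (fun y => |f y| * y ^ 2) (Ioi (0 : ℝ)))
    (hf4 : IntegrableOn (fun y => |f y| * y ^ 4) (Ioi (0 : ℝ))) :
    |∫ y in Ioi (0 : ℝ),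
        f y * (t * (y / x) * Real.sinh (x * y / t)
          * Real.exp (-(x ^ 2 + y ^ 2) / (2 * t)) - y ^ 2)|
      ≤ (((1 : ℝ) / 2) * (∫ y in Ioi (0 : ℝ), |f y| * y ^ 2) * x ^ 2
          + ((1 : ℝ) / 2) * ∫ y in Ioi (0 : ℝ), |f y| * y ^ 4) / t :=
  bessel3_semigroup_invariant_bound_general x t hx ht f hf2 hf4
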